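/- For every subset J ⊆ {1,…,n} with |J| ≥ 3 and all pairwise distinct elements i, j, k ∈ J, one has θ_{ij}(J)·θ_{jk}(J) = θ_{ik}(J) in 𝕊_n. -/

import Mathlib

/-! `θ_{ij}(J)` maps monomials to monomials: it multiplies by `x_j` the monomials in which no
variable of `J ∖ j` occurs, divides by `x_i` the remaining ones in which no variable of `J ∖ i`
occurs (these are divisible by `x_i`), and fixes all others. The identity thus becomes one
about maps of exponents, checked by cases on whether `α` vanishes on `J ∖ k`, on `J ∖ j`, or
on neither. -/

set_option synthInstance.maxHeartbeats 1000000
set_option maxHeartbeats 1600000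

open MvPolynomial

namespace SnAlg

noncomputable section

variable (K : Type*) [Field K] [CharZero K] (n : ℕ)

/-- The polynomial algebra `P_n = K[x_1,…,x_n]`. -/
abbrev Poly := MvPolynomial (Fin n) K

/-- The operator `x_i` : multiplication by the variable `x_i`. -/
def xop (i : Fin n) : Module.End K (Poly K n) := LinearMap.mulLeft K (X i)

/-- The operator `y_i`, the one-sided inverse of `x_i`: it sends the monomial `x^α` to
`x^{α - e_i}` if `α_i > 0` and to `0` otherwise. -/
def yop (i : Fin n) : Module.End K (Poly K n) :=
  (MvPolynomial.basisMonomials (Fin n) K).constr K fun α =>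
    if α i = 0 then 0
    else (MvPolynomial.basisMonomials (Fin n) K) (α - Finsupp.single i 1)

/-- The algebra `𝕊_n` of one-sided inverses of `P_n`: the subalgebra of `End_K(P_n)`
generated by `x_1,…,x_n,y_1,…,y_n`. -/
def Sn : Subalgebra K (Module.End K (Poly K n)) :=
  Algebra.adjoin K (Set.range (xop K n) ∪ Set.range (yop K n))

/-- `x_i` as an element of `𝕊_n`. -/
def Xe (i : Fin n) : Sn K n :=
  ⟨xop K n i, Algebra.subset_adjoin (Set.mem_union_left _ ⟨i, rfl⟩)⟩

/-- `y_i` as an element of `𝕊_n`. -/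
def Ye (i : Fin n) : Sn K n :=
  ⟨yop K n i, Algebra.subset_adjoin (Set.mem_union_right _ ⟨i, rfl⟩)⟩

/-- The two-sided ideal `𝔭_i` of `𝕊_n` generated by `1 - x_i y_i`. -/
def pIdeal (i : Fin n) : TwoSidedIdeal (Sn K n) :=
  TwoSidedIdeal.span {1 - Xe K n i * Ye K n i}

/-- `e_J := ∏_{k ∈ J} (1 - x_k y_k)` (the factors pairwise commute; the product is taken in
increasing order of the indices). -/
def eSet (J : Finset (Fin n)) : Sn K n :=
  ((J.sort (· ≤ ·)).map fun k => 1 - Xe K n k * Ye K n k).prod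

/-- `μ_J(a) := a e_J + 1 - e_J`. -/
def mu (J : Finset (Fin n)) (a : Sn K n) : Sn K n :=
  a * eSet K n J + 1 - eSet K n J

/-- `θ_{ij}(J) := μ_{J∖i}(y_i) · μ_{J∖j}(x_j)`. -/
def theta (J : Finset (Fin n)) (i j : Fin n) : Sn K n :=
  mu K n (J.erase i) (Ye K n i) * mu K n (J.erase j) (Xe K n j)

/-- The factor `E_{kl}(i) = x_i^k y_i^l - x_i^{k+1} y_i^{l+1}`. -/
def Efac (i : Fin n) (k l : ℕ) : Sn K n :=
  Xe K n i ^ k * Ye K n i ^ l - Xe K n i ^ (k + 1) * Ye K n i ^ (l + 1)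

/-- `E_{αβ} := ∏_{i=1}^n E_{α_i β_i}(i)`. -/
def Eab (α β : Fin n → ℕ) : Sn K n :=
  ((List.finRange n).map fun i => Efac K n i (α i) (β i)).prod

/-- `F_n`, the `K`-linear span of all the `E_{αβ}`. -/
def Fn : Submodule K (Sn K n) :=
  Submodule.span K {f | ∃ α β : Fin n → ℕ, f = Eab K n α β}

/-- A `K`-linear map is Fredholm if its kernel and cokernel are finite dimensional. -/
def IsFredholm {V U : Type*} [AddCommGroup V] [Module K V] [AddCommGroup U] [Module K U]
    (f : V →ₗ[K] U) : Prop :=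
  FiniteDimensional K (LinearMap.ker f) ∧ FiniteDimensional K (U ⧸ LinearMap.range f)

/-- The index of a (Fredholm) linear map: `dim ker - dim coker`. -/
def fredInd {V U : Type*} [AddCommGroup V] [Module K V] [AddCommGroup U] [Module K U]
    (f : V →ₗ[K] U) : ℤ :=
  (Module.finrank K (LinearMap.ker f) : ℤ) - (Module.finrank K (U ⧸ LinearMap.range f) : ℤ)


section Exponents

variable {ι : Type*}

lemma tsub_single_add_single_of_ne_zero {j : ι} {α : ι →₀ ℕ} (h : α j ≠ 0) :
    α - Finsupp.single j 1 + Finsupp.single j 1 = α :=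
  tsub_add_cancel_of_le (Finsupp.single_le_iff.2 (Nat.one_le_iff_ne_zero.2 h))

lemma not_forall_add_single_eq_zero {s : Finset ι} {k : ι} (hk : k ∈ s) (α : ι →₀ ℕ) :
    ¬ ∀ l ∈ s, (α + Finsupp.single k 1 : ι →₀ ℕ) l = 0 := fun h => by
  simpa using h k hk

variable [DecidableEq ι]

lemma apply_ne_zero_of_forall_erase_eq_zero {s t : Finset ι} {j : ι} {α : ι →₀ ℕ}
    (hts : t ⊆ s) (hs : ∀ l ∈ s.erase j, α l = 0) (ht : ¬ ∀ l ∈ t, α l = 0) : α j ≠ 0 := by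
  intro hj
  refine ht fun l hl => ?_
  rcases eq_or_ne l j with rfl | hlj
  · exact hj
  · exact hs l (Finset.mem_erase.2 ⟨hlj, hts hl⟩)

lemma forall_erase_tsub_single_eq_zero {s : Finset ι} {j : ι} {α : ι →₀ ℕ}
    (hs : ∀ l ∈ s.erase j, α l = 0) :
    ∀ l ∈ s.erase j, (α - Finsupp.single j 1 : ι →₀ ℕ) l = 0 := by
  intro l hl
  simp [hs l hl]

/-- `θ_{ij}(J) x^α = x^{thetaExp J i j α}` (see `theta_monomial`). -/
def thetaExp (J : Finset ι) (i j : ι) (α : ι →₀ ℕ) : ι →₀ ℕ :=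
  if ∀ l ∈ J.erase j, α l = 0 then α + Finsupp.single j 1
  else if ∀ l ∈ J.erase i, α l = 0 then α - Finsupp.single i 1
  else α

theorem thetaExp_thetaExp {J : Finset ι} {i j k : ι} (hj : j ∈ J) (hk : k ∈ J)
    (hij : i ≠ j) (hjk : j ≠ k) (hik : i ≠ k) (α : ι →₀ ℕ) :
    thetaExp J i j (thetaExp J j k α) = thetaExp J i k α := by
  have hkj : k ∈ J.erase j := Finset.mem_erase.2 ⟨hjk.symm, hk⟩
  have hki : k ∈ J.erase i := Finset.mem_erase.2 ⟨hik.symm, hk⟩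
  have hji : j ∈ J.erase i := Finset.mem_erase.2 ⟨hij.symm, hj⟩
  by_cases hQk : ∀ l ∈ J.erase k, α l = 0
  · simp only [thetaExp, if_pos hQk, not_forall_add_single_eq_zero hkj,
      not_forall_add_single_eq_zero hki, if_false]
  by_cases hQj : ∀ l ∈ J.erase j, α l = 0
  · have hαj : α j ≠ 0 :=
      apply_ne_zero_of_forall_erase_eq_zero (Finset.erase_subset k J) hQj hQk
    have hQi : ¬ ∀ l ∈ J.erase i, α l = 0 := fun h => hαj (h j hji)
    simp only [thetaExp, if_neg hQk, if_pos hQj, if_neg hQi,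
      if_pos (forall_erase_tsub_single_eq_zero hQj)]
    exact tsub_single_add_single_of_ne_zero hαj
  · simp only [thetaExp, if_neg hQk, if_neg hQj]

end Exponents

section Action

omit [CharZero K]

lemma yop_monomial (i : Fin n) (α : Fin n →₀ ℕ) :
    yop K n i (monomial α 1) =
      if α i = 0 then 0 else monomial (α - Finsupp.single i 1) 1 := by
  have hα : (monomial α 1 : Poly K n) = basisMonomials (Fin n) K α := by
    rw [coe_basisMonomials]
  rw [yop, hα, Module.Basis.constr_basis]
  split_ifs <;> simp [coe_basisMonomials]

lemma xop_monomial (i : Fin n) (α : Fin n →₀ ℕ) :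
    xop K n i (monomial α 1) = monomial (α + Finsupp.single i 1) 1 := by
  simp [xop, X, monomial_mul, add_comm]

lemma one_sub_Xe_mul_Ye_monomial (i : Fin n) (α : Fin n →₀ ℕ) :
    ((1 - Xe K n i * Ye K n i : Sn K n) : Module.End K (Poly K n)) (monomial α 1) =
      if α i = 0 then monomial α 1 else 0 := by
  change monomial α 1 - xop K n i (yop K n i (monomial α 1)) = _
  rw [yop_monomial]
  split_ifs with h
  · simp
  · rw [xop_monomial, tsub_single_add_single_of_ne_zero h, sub_self]

lemma list_prod_one_sub_Xe_mul_Ye_monomial (L : List (Fin n)) (α : Fin n →₀ ℕ) :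
    (((L.map fun k => 1 - Xe K n k * Ye K n k).prod : Sn K n) :
        Module.End K (Poly K n)) (monomial α 1) =
      if ∀ l ∈ L, α l = 0 then monomial α 1 else 0 := by
  induction L with
  | nil => simp
  | cons a t ih =>
    simp only [List.map_cons, List.prod_cons, MulMemClass.coe_mul, Module.End.mul_apply, ih]
    by_cases ht : ∀ l ∈ t, α l = 0
    · rw [if_pos ht, one_sub_Xe_mul_Ye_monomial]
      simp only [List.forall_mem_cons, and_iff_left ht]
    · rw [if_neg ht, map_zero, if_neg fun h => ht fun l hl => h l (List.mem_cons_of_mem a hl)]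

lemma eSet_monomial (J : Finset (Fin n)) (α : Fin n →₀ ℕ) :
    ((eSet K n J : Sn K n) : Module.End K (Poly K n)) (monomial α 1) =
      if ∀ l ∈ J, α l = 0 then monomial α 1 else 0 := by
  rw [eSet, list_prod_one_sub_Xe_mul_Ye_monomial]
  simp only [Finset.mem_sort]

lemma mu_monomial (J : Finset (Fin n)) (a : Sn K n) (α : Fin n →₀ ℕ) :
    ((mu K n J a : Sn K n) : Module.End K (Poly K n)) (monomial α 1) =
      if ∀ l ∈ J, α l = 0 then (a : Module.End K (Poly K n)) (monomial α 1)
      else monomial α 1 := by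
  change (a : Module.End K (Poly K n)) ((eSet K n J : Module.End K (Poly K n)) (monomial α 1))
    + monomial α 1 - (eSet K n J : Module.End K (Poly K n)) (monomial α 1) = _
  rw [eSet_monomial]
  split_ifs <;> simp

lemma theta_monomial (J : Finset (Fin n)) {i j : Fin n} (hj : j ∈ J) (hij : i ≠ j)
    (α : Fin n →₀ ℕ) :
    ((theta K n J i j : Sn K n) : Module.End K (Poly K n)) (monomial α 1) =
      monomial (thetaExp J i j α) 1 := by
  rw [theta, MulMemClass.coe_mul, Module.End.mul_apply, mu_monomial, thetaExp]
  by_cases hQj : ∀ l ∈ J.erase j, α l = 0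
  · have hx : ((Xe K n j : Sn K n) : Module.End K (Poly K n)) (monomial α 1)
        = monomial (α + Finsupp.single j 1) 1 := xop_monomial K n j α
    rw [if_pos hQj, if_pos hQj, hx, mu_monomial,
      if_neg (not_forall_add_single_eq_zero (Finset.mem_erase.2 ⟨hij.symm, hj⟩) α)]
  rw [if_neg hQj, if_neg hQj, mu_monomial]
  split_ifs with hQi
  · have hαi : α i ≠ 0 :=
      apply_ne_zero_of_forall_erase_eq_zero (Finset.erase_subset j J) hQi hQj
    exact (yop_monomial K n i α).trans (if_neg hαi)
  · rfl

end Action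

theorem theta_mul_theta (J : Finset (Fin n))
    (i j k : Fin n) (hj : j ∈ J) (hk : k ∈ J)
    (hij : i ≠ j) (hjk : j ≠ k) (hik : i ≠ k) :
    theta K n J i j * theta K n J j k = theta K n J i k := by
  refine Subtype.ext <| (MvPolynomial.basisMonomials (Fin n) K).ext fun α => ?_
  rw [coe_basisMonomials, MulMemClass.coe_mul, Module.End.mul_apply,
    theta_monomial K n J hk hjk, theta_monomial K n J hj hij, theta_monomial K n J hk hik,
    thetaExp_thetaExp hj hk hij hjk hik]

end

end SnAlg
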